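/- arXiv:math/0508299 — 2 statements merged into one kernel-verified Lean document; each statement's English description precedes it below -/
import Mathlib

section
/- The completed moment matrix has rank at most K: the matrix whose rows are indexed by pairs (j,l) with 1 ≤ l ≤ L_j, whose columns are indexed by all response patterns ℓ, and whose ((j,l), ℓ) entry is C^ℓ_{jl} = ∫ β_{jl}(g) Π_{j': ℓ_{j'} ≠ 0} β_{j'ℓ_{j'}}(g) dF(g), has rank at most K. -/
open MeasureTheory BigOperators

/-- The completed moment matrix has rank at most `K`: the matrix whose
rows are indexed by pairs `(j,l)` with `1 ≤ l ≤ L_j` (encoded as `(j, l-1)` with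
`l - 1 : Fin (L j)`), whose columns are indexed by all response patterns
`ℓ` (with `ℓ_j ∈ {0,1,…,L_j}` encoded as `Fin (L j + 1)`), and whose `((j,l), ℓ)` entry is
`C^ℓ_{jl} = ∫ β_{jl}(g) ∏_{j' : ℓ_{j'} ≠ 0} β_{j'ℓ_{j'}}(g) dF(g)`, has rank at most `K`. -/
theorem statement3 (J K : ℕ) (hJ : 1 ≤ J) (hK : 1 ≤ K)
    (L : Fin J → ℕ) (hL : ∀ j, 2 ≤ L j)
    (lam : Fin K → Fin J → ℕ → ℝ)
    (hlam_nonneg : ∀ k j l, 1 ≤ l → l ≤ L j → 0 ≤ lam k j l)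
    (hlam_sum : ∀ k j, ∑ l ∈ Finset.Icc 1 (L j), lam k j l = 1)
    (F : Measure (Fin K → ℝ)) [IsProbabilityMeasure F]
    (hsupp : ∀ᵐ g ∂F, (∑ k, g k = 1) ∧
      ∀ j l, 1 ≤ l → l ≤ L j → 0 ≤ ∑ k, g k * lam k j l) :
    Matrix.rank (Matrix.of fun (r : (j : Fin J) × Fin (L j))
        (ℓ : (j : Fin J) → Fin (L j + 1)) =>
      ∫ g, (∑ k, g k * lam k r.1 ((r.2 : ℕ) + 1)) *
        ∏ j ∈ Finset.univ.filter (fun j => (ℓ j : ℕ) ≠ 0),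
          (∑ k, g k * lam k j (ℓ j : ℕ)) ∂F) ≤ K := by
  classical
  unfold Matrix.rank
  -- the integrand
  set f : ((j : Fin J) × Fin (L j)) → ((j : Fin J) → Fin (L j + 1)) → (Fin K → ℝ) → ℝ :=
    fun r ℓ g => (∑ k, g k * lam k r.1 ((r.2 : ℕ) + 1)) *
      ∏ j ∈ Finset.univ.filter (fun j => (ℓ j : ℕ) ≠ 0),
        (∑ k, g k * lam k j (ℓ j : ℕ)) with hf
  -- the K candidate spanning vectors
  set w : Fin K → ((j : Fin J) × Fin (L j)) → ℝ :=
    fun k r => lam k r.1 ((r.2 : ℕ) + 1) with hw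
  set W : Submodule ℝ (((j : Fin J) × Fin (L j)) → ℝ) := Submodule.span ℝ (Set.range w) with hW
  have hwW : ∀ k, w k ∈ W := fun k => Submodule.subset_span ⟨k, rfl⟩
  -- a.e. bound: each β lies in [0,1]
  have hb : ∀ᵐ g ∂F, ∀ j l, 1 ≤ l → l ≤ L j →
      (∑ k, g k * lam k j l) ∈ Set.Icc (0:ℝ) 1 := by
    filter_upwards [hsupp] with g hg j l h1 h2
    refine ⟨hg.2 j l h1 h2, ?_⟩
    have hsum : ∑ l' ∈ Finset.Icc 1 (L j), (∑ k, g k * lam k j l') = 1 := by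
      rw [Finset.sum_comm]
      simp_rw [← Finset.mul_sum, hlam_sum, mul_one]
      exact hg.1
    calc (∑ k, g k * lam k j l)
        ≤ ∑ l' ∈ Finset.Icc 1 (L j), (∑ k, g k * lam k j l') :=
          Finset.single_le_sum
            (fun l' hl' => hg.2 j l' (Finset.mem_Icc.mp hl').1 (Finset.mem_Icc.mp hl').2)
            (Finset.mem_Icc.mpr ⟨h1, h2⟩)
      _ = 1 := hsum
  have hcont : ∀ (j : Fin J) (l : ℕ),
      Continuous (fun g : Fin K → ℝ => ∑ k, g k * lam k j l) :=
    fun j l => continuous_finset_sum _ fun k _ => (continuous_apply k).mul continuous_const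
  -- integrability of each entry's integrand
  have hIcc : ∀ (r : (j : Fin J) × Fin (L j)) (ℓ : (j : Fin J) → Fin (L j + 1)),
      ∀ᵐ g ∂F, f r ℓ g ∈ Set.Icc (0:ℝ) 1 := by
    intro r ℓ
    filter_upwards [hb] with g hg
    have h1 : (∑ k, g k * lam k r.1 ((r.2 : ℕ) + 1)) ∈ Set.Icc (0:ℝ) 1 :=
      hg r.1 _ (Nat.le_add_left 1 _) (Nat.succ_le_of_lt r.2.isLt)
    have hfac : ∀ j ∈ Finset.univ.filter (fun j => (ℓ j : ℕ) ≠ 0),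
        (∑ k, g k * lam k j (ℓ j : ℕ)) ∈ Set.Icc (0:ℝ) 1 := by
      intro j hj
      have hne : (ℓ j : ℕ) ≠ 0 := (Finset.mem_filter.mp hj).2
      exact hg j _ (Nat.one_le_iff_ne_zero.mpr hne) (Nat.lt_succ_iff.mp (ℓ j).isLt)
    have h2 : (∏ j ∈ Finset.univ.filter (fun j => (ℓ j : ℕ) ≠ 0),
        (∑ k, g k * lam k j (ℓ j : ℕ))) ∈ Set.Icc (0:ℝ) 1 :=
      ⟨Finset.prod_nonneg fun j hj => (hfac j hj).1,
        Finset.prod_le_one (fun j hj => (hfac j hj).1) (fun j hj => (hfac j hj).2)⟩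
    exact ⟨mul_nonneg h1.1 h2.1, mul_le_one₀ h1.2 h2.1 h2.2⟩
  have hint : ∀ (r : (j : Fin J) × Fin (L j)) (ℓ : (j : Fin J) → Fin (L j + 1)),
      Integrable (f r ℓ) F := by
    intro r ℓ
    refine (integrable_const (1:ℝ)).mono' (Continuous.aestronglyMeasurable ?_) ?_
    · exact (hcont _ _).mul (continuous_finset_prod _ fun j _ => hcont _ _)
    · filter_upwards [hIcc r ℓ] with g hg
      rw [Real.norm_eq_abs, abs_of_nonneg hg.1]
      exact hg.2
  -- each column lies in W
  have hcol : ∀ ℓ : (j : Fin J) → Fin (L j + 1),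
      (fun r => ∫ g, f r ℓ g ∂F) ∈ W := by
    intro ℓ
    rw [← Subspace.forall_mem_dualAnnihilator_apply_eq_zero_iff W]
    intro φ hφ
    have hφ0 : ∀ k, φ (w k) = 0 := fun k =>
      (Submodule.mem_dualAnnihilator φ).mp hφ _ (hwW k)
    set c : ((j : Fin J) × Fin (L j)) → ℝ :=
      fun r => φ (fun r' => if r = r' then 1 else 0) with hc
    have hφu : ∀ u, φ u = ∑ r, u r * c r := fun u => by
      simpa [smul_eq_mul] using LinearMap.pi_apply_eq_sum_univ φ u
    -- pointwise vanishing of the combined integrand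
    have hzero : ∀ g : Fin K → ℝ, (∑ r, c r * f r ℓ g) = 0 := by
      intro g
      have key : ∑ r : (j : Fin J) × Fin (L j), c r * (∑ k, g k * lam k r.1 ((r.2 : ℕ) + 1))
          = ∑ k, g k * φ (w k) := by
        simp_rw [hφu, Finset.mul_sum]
        rw [Finset.sum_comm]
        refine Finset.sum_congr rfl fun k _ => Finset.sum_congr rfl fun r _ => ?_
        simp only [hw]
        ring
      calc ∑ r, c r * f r ℓ g
          = (∑ r : (j : Fin J) × Fin (L j), c r * (∑ k, g k * lam k r.1 ((r.2 : ℕ) + 1))) *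
            ∏ j ∈ Finset.univ.filter (fun j => (ℓ j : ℕ) ≠ 0),
              (∑ k, g k * lam k j (ℓ j : ℕ)) := by
            rw [Finset.sum_mul]
            exact Finset.sum_congr rfl fun r _ => (mul_assoc _ _ _).symm
        _ = 0 := by simp [key, hφ0]
    rw [hφu]
    have hstep : ∀ r : (j : Fin J) × Fin (L j),
        (∫ g, f r ℓ g ∂F) * c r = ∫ g, c r * f r ℓ g ∂F := by
      intro r; rw [integral_const_mul]; ring
    simp_rw [hstep]
    rw [← integral_finset_sum _ (fun r _ => (hint r ℓ).const_mul (c r))]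
    simp [hzero]
  -- conclude the rank bound
  have hrange : LinearMap.range (Matrix.of fun (r : (j : Fin J) × Fin (L j))
      (ℓ : (j : Fin J) → Fin (L j + 1)) => ∫ g, f r ℓ g ∂F).mulVecLin ≤ W := by
    rw [Matrix.range_mulVecLin]
    refine Submodule.span_le.2 ?_
    rintro _ ⟨ℓ, rfl⟩
    exact hcol ℓ
  calc Module.finrank ℝ _ ≤ Module.finrank ℝ W := Submodule.finrank_mono hrange
    _ ≤ Fintype.card (Fin K) := finrank_range_le_card w
    _ = K := Fintype.card_fin K
end

section
/- The simplex rotation to the hyperplane is an isometry: let L ≥ 2 and c = (√L − 1)/(L − 1), and define T : ℝ^L → ℝ^{L−1} by (T x)_{l−1} = x_l − c x_1 for l = 2,...,L. Then for any x, y ∈ ℝ^L with Σ_{l=1}^L x_l = Σ_{l=1}^L y_l, one has Σ_{l=2}^L ((x_l − c x_1) − (y_l − c y_1))² = Σ_{l=1}^L (x_l − y_l)²; i.e., T preserves Euclidean distances between points of any hyperplane {x : Σ_l x_l = const}. -/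
open BigOperators

/-- Equivalently `(1 + (a - 1) c)² = a`, which is how the constant `c` is chosen. -/
lemma sub_one_mul_sq_add_two_mul_eq_one {a : ℝ} (ha : 0 ≤ a) (ha1 : a ≠ 1) :
    (a - 1) * ((Real.sqrt a - 1) / (a - 1)) ^ 2 + 2 * ((Real.sqrt a - 1) / (a - 1)) = 1 := by
  have hsub : a - 1 ≠ 0 := sub_ne_zero.mpr ha1
  have hsq : Real.sqrt a ^ 2 = a := Real.sq_sqrt ha
  field_simp
  linear_combination hsq

/-- The cross terms contribute `2 c (d i)²`, since the remaining coordinates sum to `-d i`,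
and the shifts `(#s - 1) c² (d i)²`; by `hc` these replace the dropped `(d i)²`. -/
lemma sum_erase_sub_mul_sq_eq_sum_sq {ι : Type*} [DecidableEq ι] {s : Finset ι} {i : ι}
    (hi : i ∈ s) (d : ι → ℝ) (hd : ∑ l ∈ s, d l = 0) {c : ℝ}
    (hc : ((s.card : ℝ) - 1) * c ^ 2 + 2 * c = 1) :
    ∑ l ∈ s.erase i, (d l - c * d i) ^ 2 = ∑ l ∈ s, d l ^ 2 := by
  have hsum : ∑ l ∈ s.erase i, d l = -d i := by
    linarith [Finset.add_sum_erase s d hi]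
  have hsumsq : ∑ l ∈ s.erase i, d l ^ 2 = ∑ l ∈ s, d l ^ 2 - d i ^ 2 := by
    linarith [Finset.add_sum_erase s (fun l => d l ^ 2) hi]
  have hcard : ((s.erase i).card : ℝ) = s.card - 1 := by
    rw [Finset.card_erase_of_mem hi, Nat.cast_pred (Finset.card_pos.mpr ⟨i, hi⟩)]
  calc ∑ l ∈ s.erase i, (d l - c * d i) ^ 2
      = ∑ l ∈ s.erase i, d l ^ 2 - 2 * c * d i * ∑ l ∈ s.erase i, d l
          + ((s.erase i).card : ℝ) * (c ^ 2 * d i ^ 2) := by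
        rw [Finset.mul_sum, ← Finset.sum_sub_distrib, ← nsmul_eq_mul, ← Finset.sum_const,
          ← Finset.sum_add_distrib]
        exact Finset.sum_congr rfl fun l _ => by ring
    _ = ∑ l ∈ s, d l ^ 2 := by
        rw [hsum, hsumsq, hcard]
        linear_combination d i ^ 2 * hc

/-- The simplex rotation to the hyperplane is an isometry: with
`c = (√L − 1)/(L − 1)` and `T : ℝ^L → ℝ^{L-1}`, `(Tx)_{l-1} = x_l − c x_1` for
`l = 2,…,L`, for any `x, y` with equal coordinate sums,
`∑_{l=2}^L ((x_l − c x_1) − (y_l − c y_1))² = ∑_{l=1}^L (x_l − y_l)²`. -/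
theorem statement9 (L : ℕ) (hL : 2 ≤ L) (x y : Fin L → ℝ)
    (hxy : ∑ l, x l = ∑ l, y l) :
    ∑ l ∈ Finset.univ.erase (⟨0, by omega⟩ : Fin L),
        ((x l - (Real.sqrt L - 1) / ((L : ℝ) - 1) * x ⟨0, by omega⟩)
          - (y l - (Real.sqrt L - 1) / ((L : ℝ) - 1) * y ⟨0, by omega⟩)) ^ 2
      = ∑ l, (x l - y l) ^ 2 := by
  have hc := sub_one_mul_sq_add_two_mul_eq_one (Nat.cast_nonneg L)
    (by exact_mod_cast (show L ≠ 1 by omega))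
  have hd : ∑ l, (x l - y l) = 0 := by rw [Finset.sum_sub_distrib, hxy, sub_self]
  rw [← sum_erase_sub_mul_sq_eq_sum_sq (Finset.mem_univ _) _ hd
    (by rwa [Finset.card_univ, Fintype.card_fin])]
  exact Finset.sum_congr rfl fun l _ => by ring
end
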